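/- Let h¹, h² be positive continuously differentiable real functions of the single variable y₁, and let u = (u₁,u₂) be a continuously differentiable vector field on an open subset of ℝ². Setting R⁻¹(y) := [[h²/h¹, 0], [−y₂·h¹·∂_{y₁}(h²/h¹), 1]], one has at every point y = (y₁,y₂): div_{h¹}(R⁻¹u) = (h²/h¹)·div_{h²}u. In particular, if div_{h²}u = 0 everywhere, then div_{h¹}(R⁻¹u) = 0 everywhere. -/

import Mathlib

/-- Partial derivative with respect to the first coordinate. -/
noncomputable def pd1 (f : ℝ × ℝ → ℝ) (y : ℝ × ℝ) : ℝ :=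
  deriv (fun t => f (t, y.2)) y.1

/-- Partial derivative with respect to the second coordinate. -/
noncomputable def pd2 (f : ℝ × ℝ → ℝ) (y : ℝ × ℝ) : ℝ :=
  deriv (fun t => f (y.1, t)) y.2

/-- Transformed divergence `div_h u` of the vector field `u = (u1, u2)`. -/
noncomputable def divh (h : ℝ → ℝ) (u1 u2 : ℝ × ℝ → ℝ) (y : ℝ × ℝ) : ℝ :=
  pd1 u1 y - y.2 / h y.1 * deriv h y.1 * pd2 u1 y + 1 / h y.1 * pd2 u2 y

/-!
Write `g = h²/h¹`. By the product rule, `∂₁(g u₁) = g' u₁ + g ∂₁u₁`, while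
`∂₂(u₂ − y₂ h¹ g' u₁) = ∂₂u₂ − h¹ g' (u₁ + y₂ ∂₂u₁)`. The `g' u₁` terms cancel, and the remaining
`∂₂u₁` terms combine into `y₂ (h²)' / h¹` by the product rule `(h²)' = (h¹)' g + h¹ g'`.
-/

theorem deriv_eq_deriv_mul_div_add_mul_deriv_div {f g : ℝ → ℝ} {a : ℝ}
    (hf : DifferentiableAt ℝ f a) (hg : DifferentiableAt ℝ g a) (hf0 : f a ≠ 0) :
    deriv g a = deriv f a * (g a / f a) + f a * deriv (fun x => g x / f x) a := by
  rw [deriv_fun_div hg hf hf0]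
  field_simp
  ring

section PartialDerivatives

variable {f g : ℝ × ℝ → ℝ} {c : ℝ → ℝ} {y : ℝ × ℝ}

theorem DifferentiableAt.fst_slice (hf : DifferentiableAt ℝ f y) :
    DifferentiableAt ℝ (fun t => f (t, y.2)) y.1 :=
  hf.comp y.1 (differentiableAt_id.prodMk (differentiableAt_const _))

theorem DifferentiableAt.snd_slice (hf : DifferentiableAt ℝ f y) :
    DifferentiableAt ℝ (fun t => f (y.1, t)) y.2 :=
  hf.comp y.2 ((differentiableAt_const _).prodMk differentiableAt_id)

theorem pd1_fst_mul (hc : DifferentiableAt ℝ c y.1) (hf : DifferentiableAt ℝ f y) :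
    pd1 (fun z => c z.1 * f z) y = deriv c y.1 * f y + c y.1 * pd1 f y :=
  deriv_fun_mul hc hf.fst_slice

theorem pd2_fst_mul : pd2 (fun z => c z.1 * f z) y = c y.1 * pd2 f y :=
  deriv_const_mul_field (c y.1)

theorem pd2_snd_mul (hf : DifferentiableAt ℝ f y) :
    pd2 (fun z => z.2 * f z) y = f y + y.2 * pd2 f y := by
  simp only [pd2]
  rw [deriv_fun_mul differentiableAt_fun_id hf.snd_slice, deriv_id'', one_mul]

theorem pd2_sub (hf : DifferentiableAt ℝ (fun t => f (y.1, t)) y.2)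
    (hg : DifferentiableAt ℝ (fun t => g (y.1, t)) y.2) :
    pd2 (fun z => f z - g z) y = pd2 f y - pd2 g y :=
  deriv_fun_sub hf hg

end PartialDerivatives

theorem divh_Rinv_apply {h1 h2 : ℝ → ℝ} {u1 u2 : ℝ × ℝ → ℝ} {y : ℝ × ℝ}
    (hh1 : DifferentiableAt ℝ h1 y.1) (hh2 : DifferentiableAt ℝ h2 y.1)
    (h1y : h1 y.1 ≠ 0) (h2y : h2 y.1 ≠ 0)
    (hu1 : DifferentiableAt ℝ u1 y) (hu2 : DifferentiableAt ℝ u2 y) :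
    divh h1 (fun z => h2 z.1 / h1 z.1 * u1 z)
        (fun z => u2 z - z.2 * h1 z.1 * deriv (fun x => h2 x / h1 x) z.1 * u1 z) y
      = h2 y.1 / h1 y.1 * divh h2 u1 u2 y := by
  have hg : DifferentiableAt ℝ (fun x => h2 x / h1 x) y.1 := hh2.div hh1 h1y
  set g' := deriv (fun x => h2 x / h1 x)
  have hsecond : (fun z => u2 z - z.2 * h1 z.1 * g' z.1 * u1 z)
      = fun z => u2 z - h1 z.1 * g' z.1 * (z.2 * u1 z) := by
    funext z; ring
  have hsubtrahend : DifferentiableAt ℝ (fun t => h1 y.1 * g' y.1 * (t * u1 (y.1, t))) y.2 :=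
    (differentiableAt_id.mul hu1.snd_slice).const_mul _
  rw [divh, divh, hsecond, pd1_fst_mul hg hu1, pd2_fst_mul (c := fun x => h2 x / h1 x),
    pd2_sub hu2.snd_slice hsubtrahend,
    pd2_fst_mul (c := fun x => h1 x * g' x), pd2_snd_mul hu1,
    deriv_eq_deriv_mul_div_add_mul_deriv_div hh1 hh2 h1y]
  field_simp
  ring

/-- with `R⁻¹u = ((h²/h¹)u₁, u₂ − y₂h¹∂_{y₁}(h²/h¹)u₁)` one has
`div_{h¹}(R⁻¹u) = (h²/h¹)·div_{h²}u` pointwise; in particular if `div_{h²}u = 0`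
everywhere then `div_{h¹}(R⁻¹u) = 0` everywhere. -/
theorem divh_Rinv_transform
    (h1 h2 : ℝ → ℝ) (u1 u2 : ℝ × ℝ → ℝ) (s : Set (ℝ × ℝ)) (hs : IsOpen s)
    (h1pos : ∀ x, 0 < h1 x) (h2pos : ∀ x, 0 < h2 x)
    (h1c : ContDiff ℝ 1 h1) (h2c : ContDiff ℝ 1 h2)
    (hu1 : ContDiffOn ℝ 1 u1 s) (hu2 : ContDiffOn ℝ 1 u2 s) :
    (∀ y ∈ s,
      divh h1 (fun z => h2 z.1 / h1 z.1 * u1 z)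
        (fun z => u2 z - z.2 * h1 z.1 * deriv (fun x => h2 x / h1 x) z.1 * u1 z) y
        = h2 y.1 / h1 y.1 * divh h2 u1 u2 y) ∧
    ((∀ y ∈ s, divh h2 u1 u2 y = 0) →
      ∀ y ∈ s,
        divh h1 (fun z => h2 z.1 / h1 z.1 * u1 z)
          (fun z => u2 z - z.2 * h1 z.1 * deriv (fun x => h2 x / h1 x) z.1 * u1 z) y = 0) := by
  have transform : ∀ y ∈ s, divh h1 (fun z => h2 z.1 / h1 z.1 * u1 z)
      (fun z => u2 z - z.2 * h1 z.1 * deriv (fun x => h2 x / h1 x) z.1 * u1 z) y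
      = h2 y.1 / h1 y.1 * divh h2 u1 u2 y := fun y hy =>
    divh_Rinv_apply (h1c.differentiable one_ne_zero _) (h2c.differentiable one_ne_zero _)
      (h1pos _).ne' (h2pos _).ne'
      ((hu1.differentiableOn one_ne_zero).differentiableAt (hs.mem_nhds hy))
      ((hu2.differentiableOn one_ne_zero).differentiableAt (hs.mem_nhds hy))
  refine ⟨transform, fun hdiv y hy => ?_⟩
  rw [transform y hy, hdiv y hy, mul_zero]
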